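/- arXiv:1911.08148 — 2 statements merged into one kernel-verified Lean document; each statement's English description precedes it below -/
import Mathlib

section
/- Let Δ, D, Ψ be n×n real symmetric matrices with D and Ψ positive definite, let μ ∈ (0,1), let z ∈ ℝⁿ with z ≠ 0, let G = μ·Δ + Ψ + (1−μ)·D, and define f(α) = α²·zᵀ(Δ−D)z + α·zᵀ(D+Ψ−2G)z. Then there exists α ∈ [0,1) with f(α) < f(μ); that is, the nominal packet-loss mean μ does not minimise the attacker's UDP objective over [0,1). -/
/-!
The objective is a real quadratic whose slope at the nominal mean is `f'(μ) = -zᵀ(Ψ + D)z < 0`.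
Since `μ` is an interior point of `[0, 1)`, it cannot be a local minimum (Fermat).
-/

open Matrix Filter

theorem exists_lt_of_hasDerivAt_ne_zero {f : ℝ → ℝ} {f' x : ℝ} {s : Set ℝ}
    (hf : HasDerivAt f f' x) (hf' : f' ≠ 0) (hs : s ∈ nhds x) :
    ∃ y ∈ s, f y < f x := by
  by_contra! hmin
  have hloc : IsLocalMin f x := mem_of_superset hs hmin
  exact hf' (hloc.hasDerivAt_eq_zero hf)

theorem hasDerivAt_sq_mul_add_mul (a b x : ℝ) :
    HasDerivAt (fun α : ℝ => α ^ 2 * a + α * b) (2 * x * a + b) x :=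
  (((hasDerivAt_pow 2 x).mul_const a).add ((hasDerivAt_id' x).mul_const b)).congr_deriv
    (by norm_num)

theorem udp_objective_slope_at_mean {ι R : Type*} [Fintype ι] [CommRing R]
    (Δ D Ψ : Matrix ι ι R) (μ : R) (z : ι → R) :
    2 * μ * (z ⬝ᵥ ((Δ - D) *ᵥ z))
        + z ⬝ᵥ ((D + Ψ - (2 : R) • (μ • Δ + Ψ + (1 - μ) • D)) *ᵥ z)
      = -(z ⬝ᵥ ((Ψ + D) *ᵥ z)) := by
  simp only [sub_mulVec, add_mulVec, smul_mulVec, dotProduct_sub, dotProduct_add,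
    dotProduct_smul, smul_eq_mul]
  ring

theorem udp_nominal_mean_not_minimiser_general {n : ℕ}
    (Δ D Ψ : Matrix (Fin n) (Fin n) ℝ)
    (hDpd : D.PosDef) (hΨpd : Ψ.PosDef)
    (μ : ℝ) (hμ : μ ∈ Set.Ioo (0 : ℝ) 1)
    (z : Fin n → ℝ) (hz : z ≠ 0)
    (G : Matrix (Fin n) (Fin n) ℝ)
    (hG : G = μ • Δ + Ψ + (1 - μ) • D)
    (f : ℝ → ℝ)
    (hf : ∀ α : ℝ, f α = α ^ 2 * (z ⬝ᵥ ((Δ - D) *ᵥ z))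
        + α * (z ⬝ᵥ ((D + Ψ - (2 : ℝ) • G) *ᵥ z))) :
    ∃ α ∈ Set.Ico (0 : ℝ) 1, f α < f μ := by
  have hderiv := hasDerivAt_sq_mul_add_mul (z ⬝ᵥ ((Δ - D) *ᵥ z))
    (z ⬝ᵥ ((D + Ψ - (2 : ℝ) • G) *ᵥ z)) μ
  rw [← funext hf, hG, udp_objective_slope_at_mean] at hderiv
  have hslope : -(z ⬝ᵥ ((Ψ + D) *ᵥ z)) ≠ 0 :=
    neg_ne_zero.mpr ((hΨpd.add hDpd).dotProduct_mulVec_pos hz).ne'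
  exact exists_lt_of_hasDerivAt_ne_zero hderiv hslope (Ico_mem_nhds hμ.1 hμ.2)

/-- Paper Lemma 3: the nominal packet-loss mean `μ` does not minimise the UDP
attacker objective over `[0,1)`. -/
theorem udp_nominal_mean_not_minimiser {n : ℕ}
    (Δ D Ψ : Matrix (Fin n) (Fin n) ℝ)
    (hΔ : Δ.IsSymm) (hD : D.IsSymm) (hΨ : Ψ.IsSymm)
    (hDpd : D.PosDef) (hΨpd : Ψ.PosDef)
    (μ : ℝ) (hμ : μ ∈ Set.Ioo (0 : ℝ) 1)
    (z : Fin n → ℝ) (hz : z ≠ 0)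
    (G : Matrix (Fin n) (Fin n) ℝ)
    (hG : G = μ • Δ + Ψ + (1 - μ) • D)
    (f : ℝ → ℝ)
    (hf : ∀ α : ℝ, f α = α ^ 2 * (z ⬝ᵥ ((Δ - D) *ᵥ z))
        + α * (z ⬝ᵥ ((D + Ψ - (2 : ℝ) • G) *ᵥ z))) :
    ∃ α ∈ Set.Ico (0 : ℝ) 1, f α < f μ :=
  udp_nominal_mean_not_minimiser_general Δ D Ψ hDpd hΨpd μ hμ z hz G hG f hf
end

section
/- Let Δ be an n×n real symmetric positive semidefinite matrix, Ψ an n×n real positive definite matrix, μ > 1/2, and z ∈ ℝⁿ with z ≠ 0, and define g(α) = α²·zᵀΔz − α·zᵀ(2μΔ+Ψ)z. Then g(1) < 0 = g(0), and g(α) ≤ 0 for all α ∈ [0,1]; hence the optimal TCP attack over [0,1] is to drop all packets (α = 0). -/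
open Matrix

/-! Write `a = zᵀΔz ≥ 0` and `b = zᵀΨz > 0`, so that `g(α) = α·(a(α - 2μ) - b)`.
For `α ∈ [0,1]` and `2μ > 1` the factor `α - 2μ` is nonpositive, hence both summands of
`g(α)` are nonpositive, and at `α = 1` the term `-b` makes `g(1)` strictly negative. -/

theorem Matrix.dotProduct_smul_add_mulVec {ι R : Type*} [Fintype ι] [CommSemiring R]
    (c : R) (A B : Matrix ι ι R) (z : ι → R) :
    z ⬝ᵥ ((c • A + B) *ᵥ z) = c * (z ⬝ᵥ (A *ᵥ z)) + z ⬝ᵥ (B *ᵥ z) := by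
  rw [add_mulVec, smul_mulVec, dotProduct_add, dotProduct_smul, smul_eq_mul]

theorem quadratic_attack_cost_nonpos {a b μ α : ℝ} (ha : 0 ≤ a) (hb : 0 ≤ b)
    (hμ : 1 / 2 ≤ μ) (hα : α ∈ Set.Icc (0 : ℝ) 1) :
    α ^ 2 * a - α * (2 * μ * a + b) ≤ 0 := by
  obtain ⟨hα0, hα1⟩ := hα
  have hfactor : α - 2 * μ ≤ 0 := by linarith
  have hfactored : α ^ 2 * a - α * (2 * μ * a + b) = α * a * (α - 2 * μ) - α * b := by ring
  rw [hfactored]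
  linarith [mul_nonpos_of_nonneg_of_nonpos (mul_nonneg hα0 ha) hfactor, mul_nonneg hα0 hb]

theorem quadratic_attack_cost_one_neg {a b μ : ℝ} (ha : 0 ≤ a) (hb : 0 < b)
    (hμ : 1 / 2 ≤ μ) : a - (2 * μ * a + b) < 0 := by
  nlinarith

/-- Paper claim for `μ > 1/2`: `g(1) < 0 = g(0)` and `g ≤ 0` on `[0,1]`, so the
optimal TCP attack over `[0,1]` is to drop all packets (`α = 0`). -/
theorem tcp_drop_all_packets_optimal {n : ℕ}
    (Δ Ψ : Matrix (Fin n) (Fin n) ℝ)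
    (hΔ : Δ.PosSemidef) (hΨ : Ψ.PosDef)
    (μ : ℝ) (hμ : 1 / 2 < μ)
    (z : Fin n → ℝ) (hz : z ≠ 0)
    (g : ℝ → ℝ)
    (hg : ∀ α : ℝ, g α = α ^ 2 * (z ⬝ᵥ (Δ *ᵥ z))
        - α * (z ⬝ᵥ (((2 * μ) • Δ + Ψ) *ᵥ z))) :
    g 1 < 0 ∧ g 0 = 0 ∧ ∀ α ∈ Set.Icc (0 : ℝ) 1, g α ≤ 0 := by
  have ha : 0 ≤ z ⬝ᵥ (Δ *ᵥ z) := by simpa using hΔ.dotProduct_mulVec_nonneg z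
  have hb : 0 < z ⬝ᵥ (Ψ *ᵥ z) := by simpa using hΨ.dotProduct_mulVec_pos hz
  simp only [hg, dotProduct_smul_add_mulVec]
  refine ⟨?_, by ring, fun α hα => quadratic_attack_cost_nonpos ha hb.le hμ.le hα⟩
  simpa only [one_pow, one_mul] using quadratic_attack_cost_one_neg ha hb hμ.le
end
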